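/- Let d ≥ 1, let y₀ ∈ S^d, and 0 < ρ ≤ π/2. Define f_ρ(x) = Φ(g_ρ(y₀·x)) where g_ρ is the affine bijection from [cos ρ, cos(ρ/2)] onto [−1,1] and Φ is the smooth bump function supported on [−1,1] given by Φ(t) = exp(1 − 1/(1−t²)) for |t| < 1 and 0 otherwise. Then there is a constant c_d > 0 depending only on d such that ∫_{S^d} f_ρ dσ_d ≥ c_d ρ^d, where σ_d is the normalized surface measure on S^d. -/

import Mathlib

open MeasureTheory Real
open scoped RealInnerProductSpace

noncomputable section

/-- Euclidean space `ℝ^{d+1}`. -/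
abbrev Esp (d : ℕ) := EuclideanSpace ℝ (Fin (d+1))

/-- The unit sphere `S^d ⊂ ℝ^{d+1}`. -/
def usphere (d : ℕ) : Set (Esp d) := Metric.sphere (0 : Esp d) 1

/-- The normalized surface area measure `σ_d` on `S^d` (normalized `d`-dimensional
Hausdorff measure restricted to the sphere). -/
def sigmaSph (d : ℕ) : Measure (Esp d) :=
  (μH[d] (usphere d))⁻¹ • (μH[d]).restrict (usphere d)

/-- The covering radius `ρ(X) = max_{x ∈ S^d} min_{y ∈ X} arccos(x·y)`. -/
def covRadius (d : ℕ) (X : Finset (Esp d)) : ℝ :=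
  ⨆ x : usphere d, ⨅ y : X, Real.arccos ⟪(x : Esp d), (y : Esp d)⟫

/-- The smooth bump function `Φ`. -/
def bump (t : ℝ) : ℝ :=
  if -1 < t ∧ t < 1 then Real.exp (1 - 1 / (1 - t ^ 2)) else 0

/-- The affine bijection from `[cos ρ, cos(ρ/2)]` onto `[-1, 1]`. -/
def gAff (ρ t : ℝ) : ℝ :=
  (2 * t - (Real.cos ρ + Real.cos (ρ / 2))) / (Real.cos (ρ / 2) - Real.cos ρ)

/-! The set where `gAff ρ (y₀ ⬝ x) ∈ [-1/2, 1/2]` is a band `a ≤ y₀ ⬝ x ≤ b` of the sphere, on which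
the bump is at least `exp (-1/3)`. Projecting the band orthogonally to `y₀` (a 1-Lipschitz map)
covers the annulus of radii `√(1 - b²) ≤ √(1 - a²)` in `y₀ᗮ ≅ ℝᵈ`, whose `d`-dimensional measure
is at least `(√(1 - a²) - √(1 - b²))ᵈ` times that of the unit ball; elementary trigonometry makes
this gap at least `ρ / (16 π²)`. Normalization is harmless because the sphere has positive (by the
same projection argument) and finite `d`-dimensional Hausdorff measure: it is covered by the images
of two balls under the (locally Lipschitz) inverse stereographic projections from antipodal poles.
-/

open Module Metric Set
open scoped EuclideanSpace

theorem LocallyLipschitz.hausdorffMeasure_image_lt_top {X Y : Type*} [MetricSpace X]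
    [MeasurableSpace X] [BorelSpace X] [MetricSpace Y] [MeasurableSpace Y] [BorelSpace Y]
    {f : X → Y} (hf : LocallyLipschitz f) {K : Set X} (hK : IsCompact K) {d : ℝ} (hd : 0 ≤ d)
    (hKd : μH[d] K < ⊤) : μH[d] (f '' K) < ⊤ := by
  obtain ⟨C, hC⟩ := hf.locallyLipschitzOn.exists_lipschitzOnWith_of_compact hK
  exact (hC.hausdorffMeasure_image_le hd).trans_lt
    (ENNReal.mul_lt_top (ENNReal.rpow_lt_top_of_nonneg hd ENNReal.coe_ne_top) hKd)

theorem MeasureTheory.Measure.addHaar_closedBall_diff_ball {F : Type*} [NormedAddCommGroup F]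
    [NormedSpace ℝ F] [MeasurableSpace F] [BorelSpace F] [FiniteDimensional ℝ F] [Nontrivial F]
    (μ : Measure F) [μ.IsAddHaarMeasure] (x : F) {r₁ r₂ : ℝ} (h₁ : 0 ≤ r₁) (h₁₂ : r₁ ≤ r₂) :
    μ (closedBall x r₂ \ ball x r₁) =
      ENNReal.ofReal (r₂ ^ finrank ℝ F - r₁ ^ finrank ℝ F) * μ (ball 0 1) := by
  rw [measure_sdiff (ball_subset_closedBall.trans (closedBall_subset_closedBall h₁₂))
      measurableSet_ball.nullMeasurableSet measure_ball_lt_top.ne,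
    addHaar_closedBall μ x (h₁.trans h₁₂), addHaar_ball μ x h₁,
    ← ENNReal.sub_mul fun _ _ => measure_ball_lt_top.ne, ENNReal.ofReal_sub _ (by positivity)]

section Sphere

variable {E : Type*} [NormedAddCommGroup E] [InnerProductSpace ℝ E] {v : E}

theorem inner_stereoInvFunAux (hv : ‖v‖ = 1) {w : E} (hw : ⟪v, w⟫ = 0) :
    ⟪v, stereoInvFunAux v w⟫ = (‖w‖ ^ 2 - 4) / (‖w‖ ^ 2 + 4) := by
  rw [stereoInvFunAux_apply, inner_smul_right, inner_add_right, inner_smul_right,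
    inner_smul_right, hw, real_inner_self_eq_norm_sq, hv]
  field_simp
  ring

theorem sphere_inter_inner_nonpos_subset (hv : ‖v‖ = 1) :
    sphere (0 : E) 1 ∩ {x | ⟪v, x⟫ ≤ 0} ⊆
      (stereoInvFunAux v ∘ (↑)) '' closedBall (0 : (ℝ ∙ v)ᗮ) 2 := by
  rintro x ⟨hx, hvx : ⟪v, x⟫ ≤ 0⟩
  have hxv : x ≠ v := by
    rintro rfl
    rw [real_inner_self_eq_norm_sq, hv] at hvx
    norm_num at hvx
  set w := stereoToFun v x
  have hw : stereoInvFunAux v w = x := congrArg Subtype.val (stereo_left_inv hv (x := ⟨x, hx⟩) hxv)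
  refine ⟨w, ?_, hw⟩
  have h := inner_stereoInvFunAux hv (Submodule.mem_orthogonal_singleton_iff_inner_right.mp w.2)
  rw [hw, ← Submodule.coe_norm] at h
  have : ‖w‖ ^ 2 ≤ 4 := by
    rwa [h, div_le_iff₀ (by positivity), zero_mul, sub_nonpos] at hvx
  rw [mem_closedBall_zero_iff]
  nlinarith [norm_nonneg w]

theorem closedBall_diff_ball_subset_orthogonalProjectionOnto_image (hv : ‖v‖ = 1) {a b : ℝ}
    (ha : |a| ≤ 1) (hb : 0 ≤ b) :
    closedBall (0 : (ℝ ∙ v)ᗮ) √(1 - a ^ 2) \ ball 0 √(1 - b ^ 2) ⊆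
      (ℝ ∙ v)ᗮ.orthogonalProjectionOnto '' (sphere (0 : E) 1 ∩ {x | ⟪v, x⟫ ∈ Icc a b}) := by
  rintro u ⟨hua, hub⟩
  rw [mem_closedBall_zero_iff] at hua
  rw [mem_ball_zero_iff, not_lt] at hub
  have hua' : ‖u‖ ^ 2 ≤ 1 - a ^ 2 :=
    (Real.le_sqrt (norm_nonneg u) (sub_nonneg.mpr ((sq_le_one_iff_abs_le_one a).mpr ha))).mp hua
  have hub' : 1 - ‖u‖ ^ 2 ≤ b ^ 2 := by
    rcases le_total (1 - b ^ 2) 0 with h | h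
    · nlinarith [norm_nonneg u]
    · nlinarith [(Real.sqrt_le_left (norm_nonneg u)).mp hub]
  set t := √(1 - ‖u‖ ^ 2)
  have ht : t ^ 2 = 1 - ‖u‖ ^ 2 := Real.sq_sqrt (by nlinarith [sq_nonneg a])
  have hvu : ⟪v, (u : E)⟫ = 0 := Submodule.mem_orthogonal_singleton_iff_inner_right.mp u.2
  have hinner : ⟪v, t • v + u⟫ = t := by
    rw [inner_add_right, real_inner_smul_right, real_inner_self_eq_norm_sq, hv, hvu]
    ring
  refine ⟨t • v + u, ⟨?_, ?_⟩, ?_⟩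
  · have : ‖t • v + (u : E)‖ ^ 2 = 1 := by
      rw [norm_add_sq_real, real_inner_smul_left, hvu, norm_smul, hv, Real.norm_eq_abs,
        ← Submodule.coe_norm]
      nlinarith [sq_abs t]
    rw [mem_sphere_zero_iff_norm]
    nlinarith [norm_nonneg (t • v + (u : E))]
  · change ⟪v, t • v + (u : E)⟫ ∈ Icc a b
    rw [hinner]
    exact ⟨(le_abs_self a).trans (Real.abs_le_sqrt (by linarith)),
      Real.sqrt_le_iff.mpr ⟨hb, hub'⟩⟩
  · simp [Submodule.orthogonalProjectionOnto_orthogonalComplement_singleton_eq_zero]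

variable [MeasurableSpace E] [BorelSpace E] {n : ℕ} [Fact (finrank ℝ E = n + 1)]

theorem hausdorffMeasure_sphere_inter_inner_nonpos_lt_top (hv : ‖v‖ = 1) :
    μH[n] (sphere (0 : E) 1 ∩ {x | ⟪v, x⟫ ≤ 0}) < ⊤ := by
  have : FiniteDimensional ℝ E := .of_fact_finrank_eq_succ n
  have hK : finrank ℝ (ℝ ∙ v)ᗮ = n :=
    Submodule.finrank_orthogonal_span_singleton (ne_zero_of_norm_ne_zero (hv.trans_ne one_ne_zero))
  have hf : LocallyLipschitz (stereoInvFunAux v ∘ ((↑) : (ℝ ∙ v)ᗮ → E)) :=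
    (contDiff_stereoInvFunAux.comp (ℝ ∙ v)ᗮ.subtypeL.contDiff).locallyLipschitz
  refine (measure_mono (sphere_inter_inner_nonpos_subset hv)).trans_lt
    (hf.hausdorffMeasure_image_lt_top (isCompact_closedBall 0 2) n.cast_nonneg ?_)
  rw [← hK]
  exact (isCompact_closedBall _ _).measure_lt_top

theorem hausdorffMeasure_sphere_lt_top : μH[n] (sphere (0 : E) 1) < ⊤ := by
  have : Nontrivial E := Module.nontrivial_of_finrank_eq_succ (Fact.out : finrank ℝ E = n + 1)
  obtain ⟨v, hv⟩ := exists_norm_eq E zero_le_one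
  have hcover : sphere (0 : E) 1 ⊆
      (sphere 0 1 ∩ {x | ⟪v, x⟫ ≤ 0}) ∪ (sphere 0 1 ∩ {x | ⟪-v, x⟫ ≤ 0}) := by
    intro x hx
    rcases le_total ⟪v, x⟫ 0 with h | h
    · exact Or.inl ⟨hx, h⟩
    · exact Or.inr ⟨hx, by simpa [inner_neg_left] using h⟩
  exact (measure_mono hcover).trans_lt <| (measure_union_le _ _).trans_lt <|
    ENNReal.add_lt_top.mpr ⟨hausdorffMeasure_sphere_inter_inner_nonpos_lt_top hv,
      hausdorffMeasure_sphere_inter_inner_nonpos_lt_top (by simpa using hv)⟩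

theorem hausdorffMeasure_closedBall_diff_ball_le_sphere_band (hv : ‖v‖ = 1) {a b : ℝ}
    (ha : |a| ≤ 1) (hb : 0 ≤ b) :
    μH[n] (closedBall (0 : EuclideanSpace ℝ (Fin n)) √(1 - a ^ 2) \ ball 0 √(1 - b ^ 2)) ≤
      μH[n] (sphere (0 : E) 1 ∩ {x | ⟪v, x⟫ ∈ Icc a b}) := by
  let U := (OrthonormalBasis.fromOrthogonalSpanSingleton (𝕜 := ℝ) n (ne_zero_of_norm_ne_zero
    (hv.trans_ne one_ne_zero))).repr
  have hU : closedBall (0 : EuclideanSpace ℝ (Fin n)) √(1 - a ^ 2) \ ball 0 √(1 - b ^ 2) ⊆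
      U '' ((ℝ ∙ v)ᗮ.orthogonalProjectionOnto '' (sphere (0 : E) 1 ∩ {x | ⟪v, x⟫ ∈ Icc a b})) :=
    fun w hw ↦ ⟨U.symm w,
      closedBall_diff_ball_subset_orthogonalProjectionOnto_image hv ha hb (by simpa using hw),
      U.apply_symm_apply w⟩
  calc _ ≤ _ := measure_mono hU
    _ = _ := U.isometry.hausdorffMeasure_image (Or.inl n.cast_nonneg) _
    _ ≤ _ := hausdorffMeasure_orthogonalProjectionOnto_le _ _ _ n.cast_nonneg

theorem hausdorffMeasure_ball_le_sphere :
    μH[n] (ball (0 : EuclideanSpace ℝ (Fin n)) 1) ≤ μH[n] (sphere (0 : E) 1) := by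
  have : Nontrivial E := Module.nontrivial_of_finrank_eq_succ (Fact.out : finrank ℝ E = n + 1)
  obtain ⟨v, hv⟩ := exists_norm_eq E zero_le_one
  have h := hausdorffMeasure_closedBall_diff_ball_le_sphere_band (n := n) hv (a := 0) (b := 1)
    (by simp) zero_le_one
  simp only [zero_pow two_ne_zero, sub_zero, one_pow, sub_self, Real.sqrt_one, Real.sqrt_zero,
    ball_zero, sdiff_empty] at h
  exact (measure_mono ball_subset_closedBall).trans (h.trans (measure_mono inter_subset_left))

theorem ofReal_mul_hausdorffMeasure_ball_le_sphere_band [NeZero n] (hv : ‖v‖ = 1) {a b : ℝ}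
    (ha : 0 ≤ a) (hab : a ≤ b) (hb : b ≤ 1) :
    ENNReal.ofReal ((√(1 - a ^ 2) - √(1 - b ^ 2)) ^ n) *
        μH[n] (ball (0 : EuclideanSpace ℝ (Fin n)) 1) ≤
      μH[n] (sphere (0 : E) 1 ∩ {x | ⟪v, x⟫ ∈ Icc a b}) := by
  have hsqrt : √(1 - b ^ 2) ≤ √(1 - a ^ 2) := Real.sqrt_le_sqrt (by nlinarith)
  refine le_trans ?_ (hausdorffMeasure_closedBall_diff_ball_le_sphere_band hv
    (abs_le.mpr ⟨by linarith, hab.trans hb⟩) (ha.trans hab))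
  rw [Measure.addHaar_closedBall_diff_ball _ _ (Real.sqrt_nonneg _) hsqrt,
    finrank_euclideanSpace_fin]
  gcongr
  have := pow_add_pow_le (sub_nonneg.mpr hsqrt) (Real.sqrt_nonneg (1 - b ^ 2)) (NeZero.ne n)
  rw [sub_add_cancel] at this
  linarith

end Sphere

theorem sq_div_le_cos_half_sub_cos {ρ : ℝ} (h₀ : 0 ≤ ρ) (hπ : ρ ≤ π) :
    ρ ^ 2 / (2 * π ^ 2) ≤ cos (ρ / 2) - cos ρ := by
  have hcos : cos ρ = 2 * cos (ρ / 2) ^ 2 - 1 := by rw [← cos_two_mul]; ring_nf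
  have hupper : cos (ρ / 2) ≤ 1 - 2 / π ^ 2 * (ρ / 2) ^ 2 :=
    cos_le_one_sub_mul_cos_sq (by rw [abs_of_nonneg (by linarith)]; linarith)
  have hnonneg : 0 ≤ cos (ρ / 2) := cos_nonneg_of_mem_Icc ⟨by linarith [pi_pos], by linarith⟩
  have : 2 / π ^ 2 * (ρ / 2) ^ 2 = ρ ^ 2 / (2 * π ^ 2) := by ring
  nlinarith [mul_nonneg (sub_nonneg.mpr (cos_le_one (ρ / 2))) hnonneg]

theorem sq_sub_sq_le_two_mul_sqrt_mul_sqrt_sub_sqrt {a b : ℝ} (ha : 0 ≤ a) (hab : a ≤ b)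
    (hb : b ≤ 1) : b ^ 2 - a ^ 2 ≤ 2 * √(1 - a ^ 2) * (√(1 - a ^ 2) - √(1 - b ^ 2)) := by
  have h₁ := Real.sq_sqrt (show 0 ≤ 1 - b ^ 2 by nlinarith)
  have h₂ := Real.sq_sqrt (show 0 ≤ 1 - a ^ 2 by nlinarith)
  have h₁₂ : √(1 - b ^ 2) ≤ √(1 - a ^ 2) := Real.sqrt_le_sqrt (by nlinarith)
  nlinarith [Real.sqrt_nonneg (1 - b ^ 2)]

theorem div_le_sqrt_sub_sqrt_band {ρ : ℝ} (h₀ : 0 < ρ) (hρ : ρ ≤ π / 2) :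
    ρ / (16 * π ^ 2) ≤ √(1 - ((3 * cos ρ + cos (ρ / 2)) / 4) ^ 2) -
      √(1 - ((cos ρ + 3 * cos (ρ / 2)) / 4) ^ 2) := by
  have hπ := pi_pos
  have hc₁ : 0 ≤ cos ρ := cos_nonneg_of_mem_Icc ⟨by linarith, hρ⟩
  have hc₂ : 1 / 2 ≤ cos (ρ / 2) := by
    rw [← cos_pi_div_three]
    exact cos_le_cos_of_nonneg_of_le_pi (by linarith) (by linarith) (by linarith)
  have hΔ := sq_div_le_cos_half_sub_cos h₀.le (by linarith)
  set a := (3 * cos ρ + cos (ρ / 2)) / 4 with ha_def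
  set b := (cos ρ + 3 * cos (ρ / 2)) / 4 with hb_def
  have hab : a ≤ b := by linarith [(by positivity : 0 ≤ ρ ^ 2 / (2 * π ^ 2))]
  have hb1 : b ≤ 1 := by linarith [cos_le_one (ρ / 2)]
  have hsqrt : √(1 - a ^ 2) ≤ ρ := by
    refine Real.sqrt_le_iff.mpr ⟨h₀.le, ?_⟩
    have hca : cos ρ ^ 2 ≤ a ^ 2 := pow_le_pow_left₀ hc₁ (by linarith) 2
    nlinarith [sin_sq_add_cos_sq ρ, sin_le h₀.le, sin_nonneg_of_nonneg_of_le_pi h₀.le (by linarith)]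
  have hsq : ρ ^ 2 / (8 * π ^ 2) ≤ b ^ 2 - a ^ 2 := by
    have : b ^ 2 - a ^ 2 = (cos (ρ / 2) - cos ρ) / 2 * (cos ρ + cos (ρ / 2)) := by ring
    rw [this, show ρ ^ 2 / (8 * π ^ 2) = ρ ^ 2 / (2 * π ^ 2) / 2 * (1 / 2) by ring]
    gcongr <;> linarith
  have hkey := sq_sub_sq_le_two_mul_sqrt_mul_sqrt_sub_sqrt (by positivity) hab hb1
  have hgap : 0 ≤ √(1 - a ^ 2) - √(1 - b ^ 2) :=
    sub_nonneg.mpr (Real.sqrt_le_sqrt (by nlinarith))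
  have : ρ ^ 2 / (8 * π ^ 2) = 2 * ρ * (ρ / (16 * π ^ 2)) := by ring
  nlinarith

theorem bump_nonneg (t : ℝ) : 0 ≤ bump t := by
  unfold bump
  split_ifs
  exacts [(exp_pos _).le, le_rfl]

theorem bump_le_one (t : ℝ) : bump t ≤ 1 := by
  unfold bump
  split_ifs with h
  · rw [exp_le_one_iff, sub_nonpos, le_div_iff₀ (by nlinarith)]
    nlinarith
  · exact zero_le_one

theorem exp_neg_third_le_bump {t : ℝ} (ht : |t| ≤ 1 / 2) : exp (-(1 / 3)) ≤ bump t := by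
  obtain ⟨h₁, h₂⟩ := abs_le.mp ht
  have : 1 / (1 - t ^ 2) ≤ 4 / 3 := by
    rw [div_le_iff₀ (by nlinarith)]
    nlinarith
  rw [bump, if_pos ⟨by linarith, by linarith⟩, exp_le_exp]
  linarith

theorem measurable_bump : Measurable bump :=
  Measurable.ite measurableSet_Ioo (by fun_prop) measurable_const

theorem integrable_bump_comp {α : Type*} [MeasurableSpace α] {μ : Measure α} [IsFiniteMeasure μ]
    {g : α → ℝ} (hg : Measurable g) : Integrable (fun x ↦ bump (g x)) μ :=
  Integrable.of_bound (measurable_bump.comp hg).aestronglyMeasurable 1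
    (ae_of_all _ fun x ↦ by simp [abs_of_nonneg (bump_nonneg _), bump_le_one])

theorem measurable_gAff (ρ : ℝ) : Measurable (gAff ρ) := by
  unfold gAff
  fun_prop

theorem abs_gAff_le_half {ρ t : ℝ} (hρ : cos ρ < cos (ρ / 2))
    (ht : t ∈ Icc ((3 * cos ρ + cos (ρ / 2)) / 4) ((cos ρ + 3 * cos (ρ / 2)) / 4)) :
    |gAff ρ t| ≤ 1 / 2 := by
  rw [gAff, abs_div, abs_of_pos (sub_pos.mpr hρ), div_le_iff₀ (sub_pos.mpr hρ), abs_le]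
  constructor <;> linarith [ht.1, ht.2]

theorem sigmaSph_apply (d : ℕ) (s : Set (Esp d)) :
    sigmaSph d s = (μH[d] (usphere d))⁻¹ * μH[d] (s ∩ usphere d) := by
  rw [sigmaSph, Measure.smul_apply,
    Measure.restrict_apply' (s := usphere d) isClosed_sphere.measurableSet, smul_eq_mul]

theorem isProbabilityMeasure_sigmaSph {d : ℕ} (h₀ : μH[d] (usphere d) ≠ 0)
    (h_top : μH[d] (usphere d) ≠ ⊤) : IsProbabilityMeasure (sigmaSph d) :=
  ⟨by rw [sigmaSph_apply, univ_inter, ENNReal.inv_mul_cancel h₀ h_top]⟩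

theorem ofReal_mul_le_sigmaSph_band {d : ℕ} [NeZero d] {y₀ : Esp d} (hy₀ : y₀ ∈ usphere d)
    {ρ : ℝ} (hρ : 0 < ρ) (hρπ : ρ ≤ π / 2) :
    ENNReal.ofReal ((ρ / (16 * π ^ 2)) ^ d) *
        ((μH[d] (usphere d))⁻¹ * μH[d] (ball (0 : EuclideanSpace ℝ (Fin d)) 1)) ≤
      sigmaSph d {x | ⟪y₀, x⟫ ∈ Icc ((3 * cos ρ + cos (ρ / 2)) / 4)
        ((cos ρ + 3 * cos (ρ / 2)) / 4)} := by
  have hc₁ : 0 ≤ cos ρ := cos_nonneg_of_mem_Icc ⟨by linarith [pi_pos], hρπ⟩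
  have hc₁₂ : cos ρ ≤ cos (ρ / 2) :=
    cos_le_cos_of_nonneg_of_le_pi (by linarith) (by linarith [pi_pos]) (by linarith)
  rw [sigmaSph_apply, inter_comm, mul_left_comm]
  gcongr
  calc _ ≤ ENNReal.ofReal ((√(1 - ((3 * cos ρ + cos (ρ / 2)) / 4) ^ 2) -
        √(1 - ((cos ρ + 3 * cos (ρ / 2)) / 4) ^ 2)) ^ d) * μH[d] (ball 0 1) := by
        gcongr
        exact div_le_sqrt_sub_sqrt_band hρ hρπ
    _ ≤ _ := ofReal_mul_hausdorffMeasure_ball_le_sphere_band (mem_sphere_zero_iff_norm.mp hy₀)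
        (by linarith) (by linarith) (by linarith [cos_le_one (ρ / 2)])

/-- The fooling function `f_ρ(x) = Φ(g_ρ(y₀·x))` has integral at least `c_d ρ^d`. -/
theorem fooling_function_integral_lower_bound (d : ℕ) (hd : 1 ≤ d) :
    ∃ c > (0 : ℝ), ∀ y₀ ∈ usphere d, ∀ ρ : ℝ, 0 < ρ → ρ ≤ π / 2 →
      c * ρ ^ d ≤ ∫ x, bump (gAff ρ ⟪y₀, x⟫) ∂(sigmaSph d) := by
  have : NeZero d := ⟨by omega⟩
  set M := μH[d] (usphere d)
  set B := μH[d] (ball (0 : EuclideanSpace ℝ (Fin d)) 1)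
  have hB : 0 < B := measure_ball_pos _ _ one_pos
  have hM : M ≠ ⊤ := hausdorffMeasure_sphere_lt_top.ne
  have hM₀ : M ≠ 0 := (hB.trans_le hausdorffMeasure_ball_le_sphere).ne'
  have := isProbabilityMeasure_sigmaSph hM₀ hM
  have hC : 0 < (M⁻¹ * B).toReal :=
    ENNReal.toReal_pos (mul_ne_zero (ENNReal.inv_ne_zero.mpr hM) hB.ne')
      (ENNReal.mul_ne_top (ENNReal.inv_ne_top.mpr hM₀) measure_ball_lt_top.ne)
  refine ⟨exp (-(1 / 3)) * (M⁻¹ * B).toReal * (1 / (16 * π ^ 2)) ^ d, by positivity,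
    fun y₀ hy₀ ρ hρ hρπ ↦ ?_⟩
  have hcos : cos ρ < cos (ρ / 2) :=
    cos_lt_cos_of_nonneg_of_le_pi (by linarith) (by linarith [pi_pos]) (by linarith)
  have hband := ofReal_mul_le_sigmaSph_band hy₀ hρ hρπ
  calc exp (-(1 / 3)) * (M⁻¹ * B).toReal * (1 / (16 * π ^ 2)) ^ d * ρ ^ d
      = exp (-(1 / 3)) * (ENNReal.ofReal ((ρ / (16 * π ^ 2)) ^ d) * (M⁻¹ * B)).toReal := by
        rw [ENNReal.toReal_mul (a := ENNReal.ofReal _), ENNReal.toReal_ofReal (by positivity)]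
        ring
    _ ≤ exp (-(1 / 3)) * (sigmaSph d).real {x | exp (-(1 / 3)) ≤ bump (gAff ρ ⟪y₀, x⟫)} := by
        gcongr
        refine (ENNReal.toReal_mono (measure_ne_top _ _) hband).trans (measureReal_mono ?_)
        exact fun x hx ↦ exp_neg_third_le_bump (abs_gAff_le_half hcos hx)
    _ ≤ ∫ x, bump (gAff ρ ⟪y₀, x⟫) ∂(sigmaSph d) :=
        mul_meas_ge_le_integral_of_nonneg (ae_of_all _ fun _ ↦ bump_nonneg _)
          (integrable_bump_comp ((measurable_gAff ρ).comp (by fun_prop))) _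

end
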